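/- arXiv:1808.04881 — 2 statements merged into one kernel-verified Lean document; each statement's English description precedes it below -/
import Mathlib

section
/- Let ξ, α, β > 0 with φ(α) ≠ ξ, and let V' (the 'next' observation) and V (the 'current' observation) be nonnegative random variables with E[e^{−αV'} | V] = (ξ/(ξ−φ(α)))(e^{−αV} − (α/ψ₀)e^{−ψ₀V}) a.s., where V satisfies the GPK formula E[e^{−γV}] = γφ'(0)/φ(γ) for all γ > 0 (with φ(γ) > 0 for γ > 0). Then E[e^{−αV' − βV}] = (ξ φ'(0)/(ξ − φ(α)))·((α+β)/φ(α+β) − α(ψ₀+β)/(ψ₀ φ(ψ₀+β))). -/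
open MeasureTheory

theorem joint_transform_of_consecutive_workloads {Ω : Type*} [MeasurableSpace Ω]
    (μ : Measure Ω) [IsProbabilityMeasure μ]
    (ξ α β ψ₀ : ℝ) (hξ : 0 < ξ) (hα : 0 < α) (hβ : 0 < β) (hψ₀ : 0 < ψ₀)
    (φ : ℝ → ℝ) (hφα : φ α ≠ ξ) (hφψ : φ ψ₀ = ξ) (hφpos : ∀ γ > (0:ℝ), 0 < φ γ)
    (V V' : Ω → ℝ) (hV : Measurable V) (hV' : Measurable V')
    (hV0 : ∀ ω, 0 ≤ V ω) (hV'0 : ∀ ω, 0 ≤ V' ω)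
    (hGPK : ∀ γ > (0:ℝ), ∫ ω, Real.exp (-γ * V ω) ∂μ = γ * deriv φ 0 / φ γ)
    (hcond : μ[(fun ω => Real.exp (-α * V' ω)) | MeasurableSpace.comap V inferInstance]
      =ᵐ[μ] fun ω =>
        ξ / (ξ - φ α) * (Real.exp (-α * V ω) - α / ψ₀ * Real.exp (-ψ₀ * V ω))) :
    ∫ ω, Real.exp (-α * V' ω - β * V ω) ∂μ
      = ξ * deriv φ 0 / (ξ - φ α)
          * ((α + β) / φ (α + β) - α * (ψ₀ + β) / (ψ₀ * φ (ψ₀ + β))) := by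
  have hm : MeasurableSpace.comap V inferInstance ≤ ‹MeasurableSpace Ω› := hV.comap_le
  -- integrability helpers
  have hbound : ∀ (c : ℝ) (W : Ω → ℝ), 0 < c → (∀ ω, 0 ≤ W ω) → Measurable W →
      Integrable (fun ω => Real.exp (-c * W ω)) μ := by
    intro c W hc hW0 hWm
    refine Integrable.mono' (integrable_const 1) ((hWm.const_mul (-c)).exp.aestronglyMeasurable)
      (Filter.Eventually.of_forall fun ω => ?_)
    rw [Real.norm_eq_abs, abs_of_pos (Real.exp_pos _)]
    exact Real.exp_le_one_iff.2 (by nlinarith [hW0 ω])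
  have hg : Integrable (fun ω => Real.exp (-α * V' ω)) μ := hbound α V' hα hV'0 hV'
  have hf : Integrable (fun ω => Real.exp (-β * V ω)) μ := hbound β V hβ hV0 hV
  have hfg : Integrable ((fun ω => Real.exp (-β * V ω)) * fun ω => Real.exp (-α * V' ω)) μ := by
    refine Integrable.mono' (integrable_const 1)
      (((hV.const_mul (-β)).exp.mul (hV'.const_mul (-α)).exp).aestronglyMeasurable)
      (Filter.Eventually.of_forall fun ω => ?_)
    simp only [Pi.mul_apply, Real.norm_eq_abs, abs_mul, abs_of_pos (Real.exp_pos _)]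
    have h1 : Real.exp (-β * V ω) ≤ 1 := Real.exp_le_one_iff.2 (by nlinarith [hV0 ω])
    have h2 : Real.exp (-α * V' ω) ≤ 1 := Real.exp_le_one_iff.2 (by nlinarith [hV'0 ω])
    nlinarith [Real.exp_pos (-β * V ω), Real.exp_pos (-α * V' ω)]
  have hfsm : StronglyMeasurable[MeasurableSpace.comap V inferInstance] (fun ω => Real.exp (-β * V ω)) := by
    have hVm : Measurable[MeasurableSpace.comap V inferInstance] V := Measurable.of_comap_le le_rfl
    exact ((hVm.const_mul (-β)).exp).stronglyMeasurable
  have hpull := condExp_mul_of_stronglyMeasurable_left (μ := μ) hfsm hfg hg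
  -- rewrite the integral
  have h1 : ∫ ω, Real.exp (-α * V' ω - β * V ω) ∂μ
      = ∫ ω, ((fun ω => Real.exp (-β * V ω)) * fun ω => Real.exp (-α * V' ω)) ω ∂μ := by
    congr 1; funext ω
    simp [Pi.mul_apply, ← Real.exp_add]; ring_nf
  have h2 : ∫ ω, ((fun ω => Real.exp (-β * V ω)) * fun ω => Real.exp (-α * V' ω)) ω ∂μ
      = ∫ ω, (μ[(fun ω => Real.exp (-β * V ω)) * fun ω => Real.exp (-α * V' ω)|MeasurableSpace.comap V inferInstance]) ω ∂μ :=
    (integral_condExp hm).symm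
  have h3 : ∫ ω, (μ[(fun ω => Real.exp (-β * V ω)) * fun ω => Real.exp (-α * V' ω)|MeasurableSpace.comap V inferInstance]) ω ∂μ
      = ∫ ω, Real.exp (-β * V ω) *
          (ξ / (ξ - φ α) * (Real.exp (-α * V ω) - α / ψ₀ * Real.exp (-ψ₀ * V ω))) ∂μ := by
    refine integral_congr_ae ?_
    filter_upwards [hpull, hcond] with ω h₁ h₂
    rw [h₁]; simp only [Pi.mul_apply]; rw [h₂]
  rw [h1, h2, h3]
  have hsplit : ∀ ω, Real.exp (-β * V ω) *
      (ξ / (ξ - φ α) * (Real.exp (-α * V ω) - α / ψ₀ * Real.exp (-ψ₀ * V ω)))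
      = ξ / (ξ - φ α) * (Real.exp (-(α + β) * V ω)
          - α / ψ₀ * Real.exp (-(ψ₀ + β) * V ω)) := by
    intro ω
    rw [show (-(α + β) * V ω) = (-α * V ω) + (-β * V ω) by ring,
        show (-(ψ₀ + β) * V ω) = (-ψ₀ * V ω) + (-β * V ω) by ring,
        Real.exp_add, Real.exp_add]
    ring
  simp_rw [hsplit]
  have hab : Integrable (fun ω => Real.exp (-(α + β) * V ω)) μ :=
    hbound _ V (by linarith) hV0 hV
  have hpb : Integrable (fun ω => Real.exp (-(ψ₀ + β) * V ω)) μ :=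
    hbound _ V (by linarith) hV0 hV
  rw [integral_const_mul, integral_sub hab (hpb.const_mul _), integral_const_mul,
    hGPK (α + β) (by linarith), hGPK (ψ₀ + β) (by linarith)]
  ring
end

section
/- Let Y be Bernoulli with success probability p₀(v) = (ξ/ψ₀)e^{−ψ₀ v} (0 < ξ ≤ ψ₀, v ≥ 0, p₀(v) < 1), and for ψ > ξ let ℓ(ψ) = Y(log ξ − log ψ − ψv) + (1−Y)log(1 − (ξ/ψ)e^{−ψv}). Then the second derivative of ψ ↦ E[ℓ(ψ)] evaluated at ψ = ψ₀ equals −p₀(v)(1/ψ₀ + v)²/(1 − p₀(v)). -/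
/-!
Taking expectations, `E[ℓ(ψ)] = p ℓ₁(ψ) + (1 - p) ℓ₀(ψ)` with `p = E[Y]`, so the claim is a
computation with the idle probability `g(ψ) = (ξ/ψ) e^{-ψv}`. Since `g' = -g (1/ψ + v)`, the score is
`(1/ψ + v) (g - p) / (1 - g)`, and at the true parameter, where `g = p`, only the derivative of
the factor `g - p` survives, giving `-(1/ψ + v)² g / (1 - g)`.
-/

open MeasureTheory Real Filter Topology

noncomputable section

def idleProb (ξ v ψ : ℝ) : ℝ := ξ / ψ * exp (-ψ * v)

def meanLogLik (ξ v p ψ : ℝ) : ℝ :=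
  p * (log ξ - log ψ - ψ * v) + (1 - p) * log (1 - idleProb ξ v ψ)

def score (ξ v p ψ : ℝ) : ℝ :=
  (ψ⁻¹ + v) * ((idleProb ξ v ψ - p) / (1 - idleProb ξ v ψ))

variable {ξ v ψ : ℝ}

lemma hasDerivAt_idleProb (hψ : ψ ≠ 0) :
    HasDerivAt (idleProb ξ v) (-(idleProb ξ v ψ * (ψ⁻¹ + v))) ψ := by
  have hinv : HasDerivAt (fun ψ : ℝ => ξ / ψ) (ξ * -(ψ ^ 2)⁻¹) ψ := by
    simpa only [div_eq_mul_inv] using (hasDerivAt_inv hψ).const_mul ξ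
  have hexp : HasDerivAt (fun ψ : ℝ => exp (-ψ * v)) (exp (-ψ * v) * (-1 * v)) ψ :=
    (((hasDerivAt_id ψ).neg).mul_const v).exp
  refine (hinv.mul hexp).congr_deriv ?_
  simp only [idleProb]
  field_simp
  ring

lemma hasDerivAt_meanLogLik (p : ℝ) (hψ : ψ ≠ 0) (hg : idleProb ξ v ψ < 1) :
    HasDerivAt (meanLogLik ξ v p) (score ξ v p ψ) ψ := by
  have hne : 1 - idleProb ξ v ψ ≠ 0 := by linarith
  have hlik : HasDerivAt (fun ψ => log ξ - log ψ - ψ * v) (0 - ψ⁻¹ - 1 * v) ψ :=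
    ((hasDerivAt_const ψ (log ξ)).sub (hasDerivAt_log hψ)).sub ((hasDerivAt_id ψ).mul_const v)
  have hidle : HasDerivAt (fun ψ => 1 - idleProb ξ v ψ) (idleProb ξ v ψ * (ψ⁻¹ + v)) ψ := by
    simpa only [neg_neg] using (hasDerivAt_idleProb hψ).const_sub 1
  refine ((hlik.const_mul p).add ((hidle.log hne).const_mul (1 - p))).congr_deriv ?_
  simp only [score]
  field_simp
  ring

lemma hasDerivAt_score_self (hψ : ψ ≠ 0) (hg : idleProb ξ v ψ < 1) :
    HasDerivAt (score ξ v (idleProb ξ v ψ))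
      (-(idleProb ξ v ψ * (ψ⁻¹ + v) ^ 2 / (1 - idleProb ξ v ψ))) ψ := by
  have hne : 1 - idleProb ξ v ψ ≠ 0 := by linarith
  have hg' := hasDerivAt_idleProb (ξ := ξ) (v := v) hψ
  have hfactor := ((hasDerivAt_inv hψ).add_const v).mul
    ((hg'.sub_const (idleProb ξ v ψ)).div (hg'.const_sub 1) hne)
  refine hfactor.congr_deriv ?_
  simp only [Pi.div_apply, sub_self, zero_div, zero_mul, mul_zero, sub_zero]
  field_simp
  ring

lemma deriv_deriv_meanLogLik_self (hψ : ψ ≠ 0) (hg : idleProb ξ v ψ < 1) :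
    deriv (deriv (meanLogLik ξ v (idleProb ξ v ψ))) ψ
      = -(idleProb ξ v ψ * (ψ⁻¹ + v) ^ 2 / (1 - idleProb ξ v ψ)) := by
  have hnear : ∀ᶠ φ in 𝓝 ψ, φ ≠ 0 ∧ idleProb ξ v φ < 1 :=
    (eventually_ne_nhds hψ).and ((hasDerivAt_idleProb hψ).continuousAt.eventually_lt_const hg)
  have hderiv : deriv (meanLogLik ξ v (idleProb ξ v ψ)) =ᶠ[𝓝 ψ] score ξ v (idleProb ξ v ψ) := by
    filter_upwards [hnear] with φ hφ
    exact (hasDerivAt_meanLogLik _ hφ.1 hφ.2).deriv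
  rw [hderiv.deriv_eq, (hasDerivAt_score_self hψ hg).deriv]

lemma integral_mul_add_one_sub_mul {Ω : Type*} [MeasurableSpace Ω] {μ : Measure Ω}
    [IsProbabilityMeasure μ] {Y : Ω → ℝ} (hY : Integrable Y μ) (a b : ℝ) :
    ∫ ω, (Y ω * a + (1 - Y ω) * b) ∂μ = (∫ ω, Y ω ∂μ) * a + (1 - ∫ ω, Y ω ∂μ) * b := by
  have hY' : Integrable (fun ω => 1 - Y ω) μ := (integrable_const 1).sub hY
  rw [integral_add (hY.mul_const a) (hY'.mul_const b), integral_mul_const, integral_mul_const, integral_sub (integrable_const 1) hY,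
    integral_const, probReal_univ, one_smul]

end

theorem expected_loglikelihood_second_derivative_general {Ω : Type*} [MeasurableSpace Ω]
    (μ : Measure Ω) [IsProbabilityMeasure μ]
    (ξ ψ₀ v : ℝ) (hξ : 0 < ξ) (hψ₀ : ξ ≤ ψ₀)
    (hp1 : ξ / ψ₀ * Real.exp (-ψ₀ * v) < 1)
    (Y : Ω → ℝ) (hY : Measurable Y) (hY01 : ∀ ω, Y ω = 0 ∨ Y ω = 1)
    (hp : ∫ ω, Y ω ∂μ = ξ / ψ₀ * Real.exp (-ψ₀ * v)) :
    deriv (deriv (fun ψ => ∫ ω, (Y ω * (Real.log ξ - Real.log ψ - ψ * v)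
        + (1 - Y ω) * Real.log (1 - ξ / ψ * Real.exp (-ψ * v))) ∂μ)) ψ₀
      = -(ξ / ψ₀ * Real.exp (-ψ₀ * v) * (1 / ψ₀ + v) ^ 2
          / (1 - ξ / ψ₀ * Real.exp (-ψ₀ * v))) := by
  have hψ₀ne : ψ₀ ≠ 0 := (hξ.trans_le hψ₀).ne'
  have hYint : Integrable Y μ := by
    refine .of_bound hY.aestronglyMeasurable 1 (.of_forall fun ω => ?_)
    rcases hY01 ω with h | h <;> simp [h]
  have hmean : (fun ψ => ∫ ω, (Y ω * (Real.log ξ - Real.log ψ - ψ * v)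
        + (1 - Y ω) * Real.log (1 - ξ / ψ * Real.exp (-ψ * v))) ∂μ)
      = meanLogLik ξ v (idleProb ξ v ψ₀) := by
    funext ψ
    rw [integral_mul_add_one_sub_mul hYint, hp]
    rfl
  rw [hmean, deriv_deriv_meanLogLik_self hψ₀ne hp1, one_div]
  rfl

theorem expected_loglikelihood_second_derivative {Ω : Type*} [MeasurableSpace Ω]
    (μ : Measure Ω) [IsProbabilityMeasure μ]
    (ξ ψ₀ v : ℝ) (hξ : 0 < ξ) (hψ₀ : ξ ≤ ψ₀) (hv : 0 ≤ v)
    (hp1 : ξ / ψ₀ * Real.exp (-ψ₀ * v) < 1)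
    (Y : Ω → ℝ) (hY : Measurable Y) (hY01 : ∀ ω, Y ω = 0 ∨ Y ω = 1)
    (hp : ∫ ω, Y ω ∂μ = ξ / ψ₀ * Real.exp (-ψ₀ * v)) :
    deriv (deriv (fun ψ => ∫ ω, (Y ω * (Real.log ξ - Real.log ψ - ψ * v)
        + (1 - Y ω) * Real.log (1 - ξ / ψ * Real.exp (-ψ * v))) ∂μ)) ψ₀
      = -(ξ / ψ₀ * Real.exp (-ψ₀ * v) * (1 / ψ₀ + v) ^ 2
          / (1 - ξ / ψ₀ * Real.exp (-ψ₀ * v))) :=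
  expected_loglikelihood_second_derivative_general μ ξ ψ₀ v hξ hψ₀ hp1 Y hY hY01 hp
end
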